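/- For every positive integer n, the polynomial g_n(y) = ∑_{p=0}^{n} OCPS(n+1, p+1) y^p has only real roots: it has a root of multiplicity ⌈(n−1)/2⌉ at y = −1, and its remaining ⌈n/2⌉ roots are real. -/

import Mathlib

open Finset Polynomial

def Aocps (n p : ℕ) : ℤ :=
  ∑ k ∈ Finset.range (p + 1),
    (-1 : ℤ) ^ k * (p.choose k : ℤ) * ((n + 2 * k).choose (2 * k) : ℤ)

lemma B1 (m r : ℕ) : (m+2).choose (r+2) = m.choose (r+2) + 2 * m.choose (r+1) + m.choose r := by
  rw [show m+2 = (m+1)+1 from rfl, Nat.choose_succ_succ (m+1) (r+1),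
      Nat.choose_succ_succ m r, Nat.choose_succ_succ m (r+1)]
  ring

lemma A_peel (p m : ℕ) : Aocps m (p+1) = (∑ k ∈ range (p+1),
      (-1:ℤ)^(k+1) * ((p+1).choose (k+1) : ℤ) * ((m+2*k+2).choose (2*k+2) : ℤ)) + 1 := by
  rw [Aocps, Finset.sum_range_succ'
    (fun k => (-1:ℤ)^k * (((p+1).choose k : ℕ) : ℤ) * (((m + 2*k).choose (2*k) : ℕ) : ℤ)) (p+1)]
  refine congrArg₂ HAdd.hAdd (Finset.sum_congr rfl fun k _ => ?_) (by simp)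
  rw [show m + 2*(k+1) = m + 2*k+2 by ring, show 2*(k+1) = 2*k+2 by ring]

def Wocps (n : ℕ) : ℕ → ℤ
  | 0 => 0
  | (j+1) => ((n+2*j+2).choose (2*j) : ℤ)

lemma A_rec (n p : ℕ) :
    Aocps (n+2) (p+1) - 2 * Aocps (n+1) (p+1) + Aocps n (p+1)
      + 2 * Aocps (n+1) p - Aocps n p = 0 := by
  have scalar : ∀ j : ℕ, 2 * (((n+2*j+3).choose (2*j+2) : ℤ)) - ((n+2*j+2).choose (2*j+2) : ℤ)
      = ((n+2*j+4).choose (2*j+2) : ℤ) - ((n+2*j+2).choose (2*j) : ℤ) := by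
    intro j
    have h1 : (n+2*j+4).choose (2*j+2)
        = (n+2*j+2).choose (2*j+2) + 2 * (n+2*j+2).choose (2*j+1) + (n+2*j+2).choose (2*j) := by
      have := B1 (n+2*j+2) (2*j)
      rwa [show n+2*j+2+2 = n+2*j+4 by ring] at this
    have h2 : (n+2*j+3).choose (2*j+2)
        = (n+2*j+2).choose (2*j+1) + (n+2*j+2).choose (2*j+2) := by
      have := Nat.choose_succ_succ (n+2*j+2) (2*j+1)
      simp only [Nat.succ_eq_add_one] at this
      rwa [show n+2*j+2+1 = n+2*j+3 by ring] at this
    push_cast [h1, h2]; ring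
  have key1 : (∑ k ∈ range (p+1), (-1:ℤ)^(k+1) * ((p+1).choose (k+1) : ℤ) * (((n+2)+2*k+2).choose (2*k+2) : ℤ))
      - 2 * (∑ k ∈ range (p+1), (-1:ℤ)^(k+1) * ((p+1).choose (k+1) : ℤ) * (((n+1)+2*k+2).choose (2*k+2) : ℤ))
      + (∑ k ∈ range (p+1), (-1:ℤ)^(k+1) * ((p+1).choose (k+1) : ℤ) * ((n+2*k+2).choose (2*k+2) : ℤ))
      = ∑ k ∈ range (p+1), (-1:ℤ)^(k+1) * ((p+1).choose (k+1) : ℤ) * ((n+2*k+2).choose (2*k) : ℤ) := by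
    rw [Finset.mul_sum, ← Finset.sum_sub_distrib, ← Finset.sum_add_distrib]
    refine Finset.sum_congr rfl fun k _ => ?_
    have h1 : ((n+2)+2*k+2).choose (2*k+2)
        = (n+2*k+2).choose (2*k+2) + 2 * (n+2*k+2).choose (2*k+1) + (n+2*k+2).choose (2*k) := by
      have := B1 (n+2*k+2) (2*k)
      rwa [show n+2*k+2+2 = (n+2)+2*k+2 by ring] at this
    have h2 : ((n+1)+2*k+2).choose (2*k+2)
        = (n+2*k+2).choose (2*k+1) + (n+2*k+2).choose (2*k+2) := by
      have := Nat.choose_succ_succ (n+2*k+2) (2*k+1)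
      simp only [Nat.succ_eq_add_one] at this
      rwa [show n+2*k+2+1 = (n+1)+2*k+2 by ring] at this
    push_cast [h1, h2]; ring
  have key4 : (∑ k ∈ range (p+1), (-1:ℤ)^(k+1) * ((p+1).choose (k+1) : ℤ) * ((n+2*k+2).choose (2*k) : ℤ))
      = (∑ k ∈ range (p+1), (-1:ℤ)^(k+1) * (p.choose k : ℤ) * ((n+2*k+2).choose (2*k) : ℤ))
        + ∑ k ∈ range p, (-1:ℤ)^(k+1) * (p.choose (k+1) : ℤ) * ((n+2*k+2).choose (2*k) : ℤ) := by
    have step : ∀ k ∈ range (p+1), (-1:ℤ)^(k+1) * ((p+1).choose (k+1) : ℤ) * ((n+2*k+2).choose (2*k) : ℤ)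
        = (-1:ℤ)^(k+1) * (p.choose k : ℤ) * ((n+2*k+2).choose (2*k) : ℤ)
          + (-1:ℤ)^(k+1) * (p.choose (k+1) : ℤ) * ((n+2*k+2).choose (2*k) : ℤ) := by
      intro k _
      have : ((p+1).choose (k+1) : ℤ) = (p.choose k : ℤ) + (p.choose (k+1) : ℤ) := by
        exact_mod_cast Nat.choose_succ_succ p k
      rw [this]; ring
    rw [Finset.sum_congr rfl step, Finset.sum_add_distrib, Finset.sum_range_succ
      (fun k => (-1:ℤ)^(k+1) * (p.choose (k+1) : ℤ) * ((n+2*k+2).choose (2*k) : ℤ)) p]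
    simp [Nat.choose_succ_self]
  have key2 : 2 * Aocps (n+1) p - Aocps n p
      = (∑ k ∈ range (p+1), (-1:ℤ)^k * (p.choose k : ℤ) * ((n+2*k+2).choose (2*k) : ℤ))
        - ∑ k ∈ range p, (-1:ℤ)^(k+1) * (p.choose (k+1) : ℤ) * ((n+2*k+2).choose (2*k) : ℤ) := by
    have hV : (∑ k ∈ range (p+1), (-1:ℤ)^k * (p.choose k : ℤ) * Wocps n k)
        = ∑ k ∈ range p, (-1:ℤ)^(k+1) * (p.choose (k+1) : ℤ) * ((n+2*k+2).choose (2*k) : ℤ) := by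
      rw [Finset.sum_range_succ' (fun k => (-1:ℤ)^k * (p.choose k : ℤ) * Wocps n k) p]
      simp [Wocps]
    rw [← hV, Aocps, Aocps, Finset.mul_sum, ← Finset.sum_sub_distrib, ← Finset.sum_sub_distrib]
    refine Finset.sum_congr rfl fun k _ => ?_
    cases k with
    | zero => simp [Wocps]
    | succ j =>
      have e1 : (n+1) + 2*(j+1) = n+2*j+3 := by ring
      have e2 : n + 2*(j+1) = n+2*j+2 := by ring
      have e3 : 2*(j+1) = 2*j+2 := by ring
      rw [show Wocps n (j+1) = ((n+2*j+2).choose (2*j) : ℤ) from rfl, e1, e2, e3,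
        show n+2*j+2+2 = n+2*j+4 by ring]
      linear_combination ((-1:ℤ)^(j+1) * ((p.choose (j+1) : ℕ) : ℤ)) * scalar j
  have final : (∑ k ∈ range (p+1), (-1:ℤ)^(k+1) * (p.choose k : ℤ) * ((n+2*k+2).choose (2*k) : ℤ))
      + (∑ k ∈ range (p+1), (-1:ℤ)^k * (p.choose k : ℤ) * ((n+2*k+2).choose (2*k) : ℤ)) = 0 := by
    rw [← Finset.sum_add_distrib]
    refine Finset.sum_eq_zero fun k _ => by ring
  rw [A_peel p (n+2), A_peel p (n+1), A_peel p n]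
  have := key1
  linarith [key1, key2, key4, final]

lemma A_zero : ∀ n p, n < p → Aocps n p = 0 := by
  intro n
  induction n using Nat.strong_induction_on with
  | _ n ih =>
    match n with
    | 0 =>
      intro p hp
      have : Aocps 0 p = ∑ k ∈ range (p+1), (-1:ℤ)^k * (p.choose k : ℤ) := by
        rw [Aocps]
        refine Finset.sum_congr rfl fun k _ => ?_
        simp [Nat.choose_self]
      rw [this]
      have h := Int.alternating_sum_range_choose (n := p)
      rw [if_neg (by omega : p ≠ 0)] at h
      rw [← h]
    | 1 =>
      intro p hp
      obtain ⟨q, rfl⟩ : ∃ q, p = q + 2 := ⟨p - 2, by omega⟩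
      have e : Aocps 1 (q+2) = ∑ k ∈ range (q+3), ((-1:ℤ)^k * ((q+2).choose k : ℤ) * (2*k+1)) := by
        rw [Aocps]
        refine Finset.sum_congr rfl fun k _ => ?_
        rw [show 1 + 2*k = 2*k+1 by ring, Nat.choose_succ_self_right]
        push_cast; ring
      have split : ∀ k : ℕ, ((-1:ℤ)^k * ((q+2).choose k : ℤ) * (2*k+1))
          = 2 * ((-1:ℤ)^k * k * ((q+2).choose k : ℤ)) + (-1:ℤ)^k * ((q+2).choose k : ℤ) := by
        intro k; ring
      rw [e, Finset.sum_congr rfl (fun k _ => split k), Finset.sum_add_distrib]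
      have h2 : ∑ k ∈ range (q+3), (-1:ℤ)^k * ((q+2).choose k : ℤ) = 0 := by
        have h := Int.alternating_sum_range_choose (n := q+2)
        rwa [if_neg (by omega : q+2 ≠ 0)] at h
      have h1 : ∑ k ∈ range (q+3), (-1:ℤ)^k * (k : ℤ) * ((q+2).choose k : ℤ) = 0 := by
        rw [Finset.sum_range_succ' (fun k => (-1:ℤ)^k * (k : ℤ) * ((q+2).choose k : ℤ)) (q+2)]
        have term : ∀ k : ℕ, (-1:ℤ)^(k+1) * ((k:ℤ)+1) * ((q+2).choose (k+1) : ℤ)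
            = -((q:ℤ)+2) * ((-1:ℤ)^k * ((q+1).choose k : ℤ)) := by
          intro k
          have := Nat.add_one_mul_choose_eq (q+1) k
          have hc : ((q+2 : ℕ) : ℤ) * ((q+1).choose k : ℤ) = ((q+2).choose (k+1) : ℤ) * ((k:ℤ)+1) := by
            exact_mod_cast this
          push_cast at hc ⊢
          linear_combination ((-1:ℤ)^k) * hc
        rw [Finset.sum_congr rfl fun k _ => by push_cast; exact term k]
        rw [← Finset.mul_sum]
        have h := Int.alternating_sum_range_choose (n := q+1)
        rw [if_neg (by omega : q+1 ≠ 0)] at h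
        simp [h]
      rw [h2, ← Finset.mul_sum, h1]
      ring
    | (m+2) =>
      intro p hp
      obtain ⟨p', rfl⟩ : ∃ p', p = p' + 1 := ⟨p - 1, by omega⟩
      have hr := A_rec m p'
      have h1 := ih (m+1) (by omega) (p'+1) (by omega)
      have h2 := ih m (by omega) (p'+1) (by omega)
      have h3 := ih (m+1) (by omega) p' (by omega)
      have h4 := ih m (by omega) p' (by omega)
      linarith

/-- `OCPS' n p = OCPS(n+1, p+1)`, the number of order-consecutive partition sequences
of `{1, …, n+1}` into `p+1` parts. -/
def OCPS' (n p : ℕ) : ℤ :=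
  ∑ k ∈ Finset.range (p + 1),
    (-1 : ℤ) ^ (p - k) * (p.choose k : ℤ) * ((n + 2 * k).choose (2 * k) : ℤ)

/-- The generating polynomial `g_n(y) = ∑_{p=0}^{n} OCPS(n+1, p+1) yᵖ`, over `ℝ`. -/
noncomputable def genPoly (n : ℕ) : Polynomial ℝ :=
  ∑ p ∈ Finset.range (n + 1), Polynomial.C (OCPS' n p : ℝ) * Polynomial.X ^ p

lemma neg_one_pow_sub {p k : ℕ} (h : k ≤ p) : (-1 : ℤ) ^ (p - k) = (-1) ^ p * (-1) ^ k := by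
  conv_rhs => rw [← Nat.sub_add_cancel h, pow_add, mul_assoc, ← pow_add, ← two_mul, pow_mul]
  norm_num

lemma OCPS'_eq (n p : ℕ) : OCPS' n p = (-1) ^ p * Aocps n p := by
  rw [OCPS', Aocps, Finset.mul_sum]
  refine Finset.sum_congr rfl fun k hk => ?_
  rw [neg_one_pow_sub (Nat.lt_succ_iff.mp (Finset.mem_range.mp hk))]
  ring

lemma OCPS'_zero {n p : ℕ} (h : n < p) : OCPS' n p = 0 := by
  rw [OCPS'_eq, A_zero n p h, mul_zero]

lemma OCPS'_rec (n p : ℕ) : OCPS' (n+2) (p+1)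
    = 2 * OCPS' (n+1) (p+1) + 2 * OCPS' (n+1) p - OCPS' n (p+1) - OCPS' n p := by
  simp only [OCPS'_eq]
  linear_combination ((-1:ℤ)^(p+1)) * A_rec n p

lemma OCPS'_p0 (n : ℕ) : OCPS' n 0 = 1 := by simp [OCPS']

lemma coeff_genPoly (n q : ℕ) : (genPoly n).coeff q = ((OCPS' n q : ℤ) : ℝ) := by
  rw [genPoly, Polynomial.finset_sum_coeff]
  simp only [Polynomial.coeff_C_mul, Polynomial.coeff_X_pow]
  by_cases h : q ≤ n
  · rw [Finset.sum_eq_single_of_mem q (Finset.mem_range.mpr (by omega))]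
    · simp
    · intro b _ hb; simp [Ne.symm hb]
  · rw [Finset.sum_eq_zero, OCPS'_zero (by omega : n < q)]
    · simp
    · intro b hb
      have : b ≠ q := by have := Finset.mem_range.mp hb; omega
      simp [Ne.symm this]

lemma genPoly_rec (n : ℕ) :
    genPoly (n+2) = (X + 1) * (C 2 * genPoly (n+1) - genPoly n) := by
  ext q
  rcases q with _ | q
  · simp [Polynomial.mul_coeff_zero, coeff_genPoly, OCPS'_p0]
    norm_num
  · rw [add_mul, one_mul, Polynomial.coeff_add, Polynomial.coeff_X_mul, Polynomial.coeff_sub,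
      Polynomial.coeff_sub, Polynomial.coeff_C_mul, Polynomial.coeff_C_mul,
      coeff_genPoly, coeff_genPoly, coeff_genPoly, coeff_genPoly, coeff_genPoly]
    have h := congrArg (fun z : ℤ => (z : ℝ)) (OCPS'_rec n q)
    push_cast at h ⊢
    linarith

lemma OCPS'_diag : ∀ n : ℕ, OCPS' n n = 2^n := by
  intro n
  induction n using Nat.strong_induction_on with
  | _ n ih =>
    match n with
    | 0 => simp [OCPS']
    | 1 =>
      rw [OCPS']
      rw [Finset.sum_range_succ, Finset.sum_range_one]
      norm_num [Nat.choose]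
      try omega
      try decide
    | (m+2) =>
      have h := OCPS'_rec m (m+1)
      rw [OCPS'_zero (show m+1 < m+1+1 by omega), OCPS'_zero (show m < m+1+1 by omega),
        OCPS'_zero (show m < m+1 by omega), ih (m+1) (by omega)] at h
      have h2 : OCPS' (m+2) (m+2) = 2 * 2^(m+1) := by
        rw [show m+2 = m+1+1 from rfl]; linarith
      rw [h2]; ring

lemma natDegree_genPoly (n : ℕ) : (genPoly n).natDegree = n := by
  have hle : (genPoly n).natDegree ≤ n := by
    refine Polynomial.natDegree_le_iff_coeff_eq_zero.mpr fun q hq => ?_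
    rw [coeff_genPoly, OCPS'_zero hq]; simp
  have hcoef : (genPoly n).coeff n ≠ 0 := by
    rw [coeff_genPoly, OCPS'_diag]
    norm_num
  exact le_antisymm hle (Polynomial.le_natDegree_of_ne_zero hcoef)

lemma genPoly_ne_zero (n : ℕ) : genPoly n ≠ 0 := by
  intro h
  have hcoef : (genPoly n).coeff n ≠ 0 := by
    rw [coeff_genPoly, OCPS'_diag]; norm_num
  rw [h] at hcoef; simp at hcoef

lemma pow_dvd_genPoly : ∀ n : ℕ, ((X + 1 : Polynomial ℝ))^(n/2) ∣ genPoly n := by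
  intro n
  induction n using Nat.strong_induction_on with
  | _ n ih =>
    match n with
    | 0 => simp
    | 1 => simp
    | (m+2) =>
      have h1 : ((X + 1 : Polynomial ℝ))^(m/2) ∣ genPoly m := ih m (by omega)
      have h2 : ((X + 1 : Polynomial ℝ))^(m/2) ∣ genPoly (m+1) :=
        (pow_dvd_pow _ (by omega : m/2 ≤ (m+1)/2)).trans (ih (m+1) (by omega))
      have h3 : ((X + 1 : Polynomial ℝ))^(m/2) ∣ C 2 * genPoly (m+1) - genPoly m :=
        dvd_sub (h2.mul_left _) h1
      rw [genPoly_rec m, show (m+2)/2 = m/2 + 1 by omega, pow_succ']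
      exact mul_dvd_mul dvd_rfl h3

open Real in
lemma eval_genPoly : ∀ (n : ℕ) (θ : ℝ),
    cos θ * (genPoly n).eval (-(sin θ)^2) = (cos θ)^n * cos (((n:ℝ)+1) * θ) := by
  intro n
  induction n using Nat.strong_induction_on with
  | _ n ih =>
    match n with
    | 0 =>
      intro θ
      simp [genPoly, OCPS'_p0]
    | 1 =>
      intro θ
      have hv : (genPoly 1).eval (-(sin θ)^2) = 1 + 2 * (-(sin θ)^2) := by
        rw [genPoly, Finset.sum_range_succ, Finset.sum_range_one]
        rw [show OCPS' 1 1 = 2 from by rw [OCPS'_diag 1]; norm_num, OCPS'_p0]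
        simp
      have hs := Real.sin_sq_add_cos_sq θ
      have h2 : ((1:ℕ):ℝ) + 1 = 2 := by norm_num
      rw [hv, h2, Real.cos_two_mul]
      linear_combination (-2 * Real.cos θ) * hs
    | (m+2) =>
      intro θ
      have ih1 := ih m (by omega) θ
      have ih2 := ih (m+1) (by omega) θ
      have hs := Real.sin_sq_add_cos_sq θ
      rw [genPoly_rec m]
      simp only [Polynomial.eval_mul, Polynomial.eval_sub, Polynomial.eval_add,
        Polynomial.eval_C, Polynomial.eval_X, Polynomial.eval_one]
      have e1 : ((↑(m+2):ℝ)+1)*θ = ((((m+1):ℕ):ℝ)+1)*θ + θ := by push_cast; ring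
      have e2 : ((↑m:ℝ)+1)*θ = ((((m+1):ℕ):ℝ)+1)*θ - θ := by push_cast; ring
      rw [e1, Real.cos_add]
      rw [e2, Real.cos_sub] at ih1
      linear_combination (2*(-Real.sin θ^2+1)) * ih2 - (-Real.sin θ^2+1) * ih1
        - (Real.cos θ^(m+1) * Real.cos ((((m+1:ℕ):ℝ)+1)*θ)
            - Real.cos θ^m * Real.sin ((((m+1:ℕ):ℝ)+1)*θ) * Real.sin θ) * hs

theorem genPoly_real_rooted (n : ℕ) (hn : 1 ≤ n) :
    (genPoly n).rootMultiplicity (-1) = (n - 1 + 1) / 2 ∧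
    ∀ z ∈ ((genPoly n).map (algebraMap ℝ ℂ)).roots, z.im = 0 := by
  have hP0 := genPoly_ne_zero n
  set c := n - n/2 with hc
  set θ : ℕ → ℝ := fun j => (2*(j:ℝ)+1) * Real.pi / (2*(n:ℝ)+2) with hθ
  have hπ := Real.pi_pos
  have h2n : (2*(n:ℝ)+2) ≠ 0 := by positivity
  have hθpos : ∀ j, 0 < θ j := fun j => by rw [hθ]; positivity
  have hθlt : ∀ j < c, θ j < Real.pi/2 := by
    intro j hj
    rw [hθ]
    rw [div_lt_div_iff₀ (by positivity) (by norm_num : (0:ℝ) < 2)]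
    have h2j : 2*j < n := by omega
    have h2j' : 2*(j:ℝ) < n := by exact_mod_cast h2j
    nlinarith [hπ]
  have hroot : ∀ j < c, (genPoly n).IsRoot (-(Real.sin (θ j))^2) := by
    intro j hj
    have hcosne : Real.cos (θ j) ≠ 0 :=
      ne_of_gt (Real.cos_pos_of_mem_Ioo ⟨by linarith [hθpos j], hθlt j hj⟩)
    have hzero : Real.cos (((n:ℝ)+1) * θ j) = 0 := by
      rw [Real.cos_eq_zero_iff]
      refine ⟨(j:ℤ), ?_⟩
      rw [hθ]
      push_cast
      field_simp
    have h := eval_genPoly n (θ j)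
    rw [hzero, mul_zero] at h
    exact (mul_eq_zero.mp h).resolve_left hcosne
  have hmemIcc : ∀ j < c, θ j ∈ Set.Icc (-(Real.pi/2)) (Real.pi/2) :=
    fun j hj => ⟨by linarith [hθpos j], le_of_lt (hθlt j hj)⟩
  have hsin : ∀ j < c, 0 < Real.sin (θ j) ∧ Real.sin (θ j) < 1 := by
    intro j hj
    constructor
    · exact Real.sin_pos_of_pos_of_lt_pi (hθpos j) (by linarith [hθlt j hj, hπ])
    · have := Real.strictMonoOn_sin (hmemIcc j hj)
        (⟨by linarith, le_refl _⟩ : Real.pi/2 ∈ Set.Icc (-(Real.pi/2)) (Real.pi/2)) (hθlt j hj)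
      rwa [Real.sin_pi_div_two] at this
  have hinj : Set.InjOn (fun j => -(Real.sin (θ j))^2) (Finset.range c) := by
    intro i hi j hj hij
    have hi' : i < c := Finset.mem_range.mp (by exact_mod_cast hi)
    have hj' : j < c := Finset.mem_range.mp (by exact_mod_cast hj)
    simp only at hij
    have h1 : Real.sin (θ i) = Real.sin (θ j) := by
      have hsq : (Real.sin (θ i))^2 = (Real.sin (θ j))^2 := by linarith
      nlinarith [(hsin i hi').1, (hsin j hj').1]
    have h2 : θ i = θ j :=
      Real.strictMonoOn_sin.injOn (hmemIcc i hi') (hmemIcc j hj') h1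
    rw [hθ] at h2
    simp only [div_left_inj' h2n] at h2
    have : (i:ℝ) = j := by
      have := mul_right_cancel₀ (ne_of_gt hπ) h2
      linarith
    exact_mod_cast this
  set G : Finset ℝ := (Finset.range c).image (fun j => -(Real.sin (θ j))^2) with hG
  have hGcard : G.card = c := by
    rw [hG, Finset.card_image_of_injOn hinj, Finset.card_range]
  have hGsub : ∀ a ∈ G, a ∈ (genPoly n).roots.toFinset := by
    intro a ha
    obtain ⟨j, hj, rfl⟩ := Finset.mem_image.mp ha
    exact Multiset.mem_toFinset.mpr
      (Polynomial.mem_roots'.mpr ⟨hP0, hroot j (Finset.mem_range.mp hj)⟩)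
  have hm1G : (-1:ℝ) ∉ G := by
    intro h
    obtain ⟨j, hj, hjeq⟩ := Finset.mem_image.mp h
    have h1 := hsin j (Finset.mem_range.mp hj)
    nlinarith [h1.1, h1.2]
  have hmul_ge : n/2 ≤ (genPoly n).rootMultiplicity (-1) := by
    rw [Polynomial.le_rootMultiplicity_iff hP0]
    have hX : (X : Polynomial ℝ) - C (-1) = X + 1 := by
      rw [map_neg, sub_neg_eq_add, Polynomial.C_1]
    rw [hX]
    exact pow_dvd_genPoly n
  have hsum : ∑ a ∈ insert (-1:ℝ) G, (genPoly n).roots.count a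
      ≤ Multiset.card (genPoly n).roots := by
    rw [← Multiset.toFinset_sum_count_eq]
    apply Finset.sum_le_sum_of_ne_zero
    intro x _ hx0
    exact Multiset.mem_toFinset.mpr (Multiset.count_pos.mp (Nat.pos_of_ne_zero hx0))
  rw [Finset.sum_insert hm1G] at hsum
  have hGge : c ≤ ∑ a ∈ G, (genPoly n).roots.count a := by
    calc c = ∑ _a ∈ G, 1 := by rw [Finset.sum_const, hGcard]; simp
    _ ≤ ∑ a ∈ G, (genPoly n).roots.count a := Finset.sum_le_sum fun a ha =>
        Multiset.one_le_count_iff_mem.mpr (Multiset.mem_toFinset.mp (hGsub a ha))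
  have hcard : Multiset.card (genPoly n).roots ≤ n := by
    have h := Polynomial.card_roots' (genPoly n)
    rwa [natDegree_genPoly] at h
  have hcount : (genPoly n).roots.count (-1) = (genPoly n).rootMultiplicity (-1) :=
    Polynomial.count_roots _
  have hmul : (genPoly n).rootMultiplicity (-1) = n/2 := by omega
  constructor
  · rw [hmul]; omega
  · have hcard_eq : Multiset.card (genPoly n).roots = n := by omega
    have hsplits : (genPoly n).Splits :=
      Polynomial.splits_iff_card_roots.mpr (by rw [hcard_eq, natDegree_genPoly])
    intro z hz
    rw [Polynomial.Splits.roots_map hsplits _] at hz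
    obtain ⟨x, _, rfl⟩ := Multiset.mem_map.mp hz
    simp
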